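/- Let ρ : ℝⁿ → ℝ be continuous with support contained in the closed ball B(0, r/2), and suppose T > 2r > 0. If ∫₀ᵀ ρ(y + tω) dt = 0 for all unit vectors ω ∈ Sⁿ⁻¹ and all y ∈ ℝⁿ with r/2 < |y| < T - r/2, then ∫_ℝ ρ(y + tω) dt = 0 for all ω ∈ Sⁿ⁻¹ and all y ∈ ℝⁿ. -/

import Mathlib

/-!
Write a line as `{p + t • ω}` with `p ⊥ ω`, so that `‖p + t • ω‖ ^ 2 = ‖p‖ ^ 2 + t ^ 2`.
If `‖p‖ > r / 2` the line misses the support of `ρ`. Otherwise move the base point to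
`y' = p - r • ω`: then `r < ‖y'‖ ≤ (√5 / 2) r < T - r / 2`, and `ρ (y' + t • ω) ≠ 0` forces
`|t - r| ≤ r / 2`, so the integral over `ℝ` is the hypothesised integral over `[0, T]`.
-/

open MeasureTheory intervalIntegral
open scoped RealInnerProductSpace

section LineIntegral

variable {E F : Type*} [NormedAddCommGroup E] [InnerProductSpace ℝ E]

theorem integral_comp_add_smul_shift [NormedAddCommGroup F] [NormedSpace ℝ F] (f : E → F)
    (y ω : E) (s : ℝ) :
    ∫ t : ℝ, f (y + t • ω) = ∫ t : ℝ, f ((y + s • ω) + t • ω) := by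
  rw [← integral_add_right_eq_self (fun t => f (y + t • ω)) s]
  congr 1 with t
  rw [add_assoc, ← add_smul, add_comm s]

theorem inner_sub_inner_smul_self {ω : E} (hω : ‖ω‖ = 1) (y : E) :
    ⟪y - ⟪y, ω⟫ • ω, ω⟫ = 0 := by
  rw [inner_sub_left, real_inner_smul_left, real_inner_self_eq_norm_sq, hω]
  ring

theorem norm_add_smul_sq_of_inner_eq_zero {p ω : E} (hω : ‖ω‖ = 1) (hp : ⟪p, ω⟫ = 0)
    (t : ℝ) : ‖p + t • ω‖ ^ 2 = ‖p‖ ^ 2 + t ^ 2 := by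
  rw [norm_add_sq_real, real_inner_smul_right, hp, norm_smul, hω, Real.norm_eq_abs, mul_one,
    sq_abs]
  ring

variable [Zero F] {f : E → F} {R : ℝ} {p ω : E}

theorem norm_le_of_apply_add_smul_ne_zero (hsupp : Function.support f ⊆ Metric.closedBall 0 R)
    (hω : ‖ω‖ = 1) (hp : ⟪p, ω⟫ = 0) {t : ℝ} (ht : f (p + t • ω) ≠ 0) :
    ‖p‖ ≤ R ∧ |t| ≤ R := by
  have hR : ‖p + t • ω‖ ≤ R := by simpa using hsupp ht
  have hR0 : 0 ≤ R := (norm_nonneg _).trans hR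
  have hsq : ‖p‖ ^ 2 + t ^ 2 ≤ R ^ 2 :=
    norm_add_smul_sq_of_inner_eq_zero hω hp t ▸ pow_le_pow_left₀ (norm_nonneg _) hR 2
  exact ⟨by simpa using abs_le_of_sq_le_sq (a := ‖p‖) (by linarith [sq_nonneg t]) hR0,
    abs_le_of_sq_le_sq (by linarith [sq_nonneg ‖p‖]) hR0⟩

theorem apply_add_smul_eq_zero_of_lt_norm (hsupp : Function.support f ⊆ Metric.closedBall 0 R)
    (hω : ‖ω‖ = 1) (hp : ⟪p, ω⟫ = 0) (hfar : R < ‖p‖) (t : ℝ) : f (p + t • ω) = 0 := by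
  by_contra ht
  exact hfar.not_ge (norm_le_of_apply_add_smul_ne_zero hsupp hω hp ht).1

theorem support_comp_add_smul_subset (hsupp : Function.support f ⊆ Metric.closedBall 0 R)
    (hω : ‖ω‖ = 1) (hp : ⟪p, ω⟫ = 0) (s : ℝ) :
    Function.support (fun t => f ((p + s • ω) + t • ω)) ⊆ Set.Icc (-s - R) (-s + R) := by
  intro t ht
  rw [Function.mem_support, add_assoc, ← add_smul] at ht
  have := abs_le.mp (norm_le_of_apply_add_smul_ne_zero hsupp hω hp ht).2
  constructor <;> linarith

end LineIntegral

theorem stmt18_general {n : ℕ} (r T : ℝ) (hr : 0 < r) (hT : 2 * r < T)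
    (ρ : EuclideanSpace ℝ (Fin n) → ℝ)
    (hsupp : Function.support ρ ⊆ Metric.closedBall 0 (r / 2))
    (h : ∀ ω : EuclideanSpace ℝ (Fin n), ‖ω‖ = 1 →
      ∀ y : EuclideanSpace ℝ (Fin n), r / 2 < ‖y‖ → ‖y‖ < T - r / 2 →
        (∫ t in (0 : ℝ)..T, ρ (y + t • ω)) = 0) :
    ∀ ω : EuclideanSpace ℝ (Fin n), ‖ω‖ = 1 →
      ∀ y : EuclideanSpace ℝ (Fin n), (∫ t : ℝ, ρ (y + t • ω)) = 0 := by
  intro ω hω y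
  set p := y - ⟪y, ω⟫ • ω
  have hp : ⟪p, ω⟫ = 0 := inner_sub_inner_smul_self hω y
  have hy : y + (-⟪y, ω⟫) • ω = p := by rw [neg_smul, ← sub_eq_add_neg]
  rw [integral_comp_add_smul_shift ρ y ω (-⟪y, ω⟫), hy]
  rcases lt_or_ge (r / 2) ‖p‖ with hfar | hnear
  · simp [apply_add_smul_eq_zero_of_lt_norm hsupp hω hp hfar]
  have hsq := norm_add_smul_sq_of_inner_eq_zero hω hp (-r)
  have hline : Function.support (fun t => ρ ((p + -r • ω) + t • ω)) ⊆ Set.Ioc 0 T :=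
    (support_comp_add_smul_subset hsupp hω hp (-r)).trans fun t ht =>
      ⟨by linarith [ht.1], by linarith [ht.2]⟩
  rw [integral_comp_add_smul_shift ρ p ω (-r), ← integral_eq_integral_of_support_subset hline]
  refine h ω hω _ ?_ ?_
  · nlinarith [norm_nonneg (p + -r • ω)]
  · nlinarith [norm_nonneg (p + -r • ω), norm_nonneg p]

theorem stmt18 {n : ℕ} (r T : ℝ) (hr : 0 < r) (hT : 2 * r < T)
    (ρ : EuclideanSpace ℝ (Fin n) → ℝ) (hρ : Continuous ρ)
    (hsupp : Function.support ρ ⊆ Metric.closedBall 0 (r / 2))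
    (h : ∀ ω : EuclideanSpace ℝ (Fin n), ‖ω‖ = 1 →
      ∀ y : EuclideanSpace ℝ (Fin n), r / 2 < ‖y‖ → ‖y‖ < T - r / 2 →
        (∫ t in (0 : ℝ)..T, ρ (y + t • ω)) = 0) :
    ∀ ω : EuclideanSpace ℝ (Fin n), ‖ω‖ = 1 →
      ∀ y : EuclideanSpace ℝ (Fin n), (∫ t : ℝ, ρ (y + t • ω)) = 0 :=
  stmt18_general r T hr hT ρ hsupp h
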